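/- Let v, f be integers with 0 ≤ f ≤ v-1 and v-f even. Under the action of the cyclic group generated by A_{v,f} on the 1-dimensional subspaces (points) of GF(2)^v, there are exactly 2^f - 1 fixed points, exactly (2^{v-f} - 1)/3 orbit lines, and exactly (2^{v-f} - 1)(2^f - 1)/3 orbit triangles. -/

import Mathlib

/-!
Over `GF(2)` every point is `⟨x⟩` for exactly one nonzero `x`, so points and their orbits can be
handled through nonzero vectors. On each pair of head coordinates (the first `v - f`) the matrix
`A = A_{v,f}` acts by `(a, b) ↦ (b, a + b)`, which has order 3 and fixes only `0`; on the tail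
(the last `f` coordinates) it is the identity. Hence `A³ = 1`, `x` is fixed iff its head
vanishes, and `x + xA + xA²` is the tail of `x`. Three distinct nonzero vectors lie in a plane
iff they sum to zero, so the orbit of a non-fixed `x` is a line iff its tail vanishes. It
remains to count vectors by which of head and tail vanish, and to divide the non-fixed ones
into orbits of size 3.
-/

/-- The action of a matrix `A` on subspaces of `GF(2)^v`, induced by the
right action `x ↦ x ⬝ A` on vectors. -/
def mapMat {v : ℕ} (A : Matrix (Fin v) (Fin v) (ZMod 2))
    (W : Submodule (ZMod 2) (Fin v → ZMod 2)) : Submodule (ZMod 2) (Fin v → ZMod 2) :=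
  W.map A.vecMulLinear

/-- The block-diagonal matrix `A_{v,f}` over `GF(2)`: `(v-f)/2` consecutive 2×2 blocks
`[[0,1],[1,1]]` on the diagonal, followed by the `f×f` identity matrix. -/
def Avf (v f : ℕ) : Matrix (Fin v) (Fin v) (ZMod 2) :=
  Matrix.of fun i j =>
    if (i : ℕ) < v - f then
      if (i : ℕ) % 2 = 0 then (if (j : ℕ) = (i : ℕ) + 1 then 1 else 0)
      else (if (j : ℕ) = (i : ℕ) - 1 ∨ (j : ℕ) = (i : ℕ) then 1 else 0)
    else (if j = i then 1 else 0)

/-- `O` is an orbit of size 3 of the action of `⟨A_{v,f}⟩` on the points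
(1-dimensional subspaces) of `GF(2)^v`. -/
def IsPtOrbit3 (v f : ℕ) (O : Set (Submodule (ZMod 2) (Fin v → ZMod 2))) : Prop :=
  ∃ P : Submodule (ZMod 2) (Fin v → ZMod 2), Module.finrank (ZMod 2) P = 1 ∧
    O = {P, mapMat (Avf v f) P, mapMat (Avf v f) (mapMat (Avf v f) P)} ∧ O.ncard = 3

/-- An orbit of size 3 on points whose three points lie in a common 2-dimensional
subspace: an orbit line. -/
def IsOrbitLine (v f : ℕ) (O : Set (Submodule (ZMod 2) (Fin v → ZMod 2))) : Prop :=
  IsPtOrbit3 v f O ∧ ∃ L : Submodule (ZMod 2) (Fin v → ZMod 2),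
    Module.finrank (ZMod 2) L = 2 ∧ ∀ P ∈ O, P ≤ L

/-- An orbit of size 3 on points whose three points do not lie in a common
2-dimensional subspace: an orbit triangle. -/
def IsOrbitTriangle (v f : ℕ) (O : Set (Submodule (ZMod 2) (Fin v → ZMod 2))) : Prop :=
  IsPtOrbit3 v f O ∧ ¬ ∃ L : Submodule (ZMod 2) (Fin v → ZMod 2),
    Module.finrank (ZMod 2) L = 2 ∧ ∀ P ∈ O, P ≤ L

open Submodule Module

theorem finrank_eq_one_iff_exists_eq_span_singleton {K V : Type*} [DivisionRing K]
    [AddCommGroup V] [Module K V] {P : Submodule K V} :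
    finrank K P = 1 ↔ ∃ x ≠ 0, P = K ∙ x := by
  constructor
  · intro h
    obtain ⟨w, hw0, hw⟩ := finrank_eq_one_iff'.1 h
    refine ⟨w, by simpa using hw0, le_antisymm (fun z hz => ?_) ?_⟩
    · obtain ⟨c, hc⟩ := hw ⟨z, hz⟩
      exact mem_span_singleton.2 ⟨c, congrArg Subtype.val hc⟩
    · exact (span_singleton_le_iff_mem _ _).2 w.2
  · rintro ⟨x, hx, rfl⟩
    exact finrank_span_singleton hx

theorem ZMod.two_eq_zero_or_one (c : ZMod 2) : c = 0 ∨ c = 1 := by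
  revert c
  decide

section ZModTwo

variable {V : Type*} [AddCommGroup V] [Module (ZMod 2) V]

theorem span_singleton_inj_of_zmod_two {x y : V} :
    (ZMod 2 ∙ x) = (ZMod 2 ∙ y) ↔ x = y := by
  rw [span_singleton_eq_span_singleton]
  exact ⟨fun ⟨u, hu⟩ => by rwa [Subsingleton.elim u 1, one_smul] at hu,
    fun h => ⟨1, by rw [one_smul, h]⟩⟩

theorem finrank_span_pair_of_zmod_two {x y : V} (hx : x ≠ 0) (hy : y ≠ 0) (hxy : x ≠ y) :
    finrank (ZMod 2) (span (ZMod 2) {x, y}) = 2 := by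
  have hind : LinearIndependent (ZMod 2) ![x, y] := by
    refine (LinearIndependent.pair_iff' hx).2 fun c => ?_
    rcases c.two_eq_zero_or_one with rfl | rfl
    · simpa using hy.symm
    · simpa using hxy
  have := finrank_span_eq_card hind
  rwa [Matrix.range_cons_cons_empty, Fintype.card_fin] at this

/-- Over `GF(2)` the plane through `x` and `y` is `{0, x, y, x + y}`. -/
theorem exists_finrank_eq_two_mem_iff {x y z : V} (hx : x ≠ 0) (hy : y ≠ 0) (hz : z ≠ 0)
    (hxy : x ≠ y) (hxz : x ≠ z) (hyz : y ≠ z) :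
    (∃ L : Submodule (ZMod 2) V, finrank (ZMod 2) L = 2 ∧ x ∈ L ∧ y ∈ L ∧ z ∈ L) ↔
      x + y + z = 0 := by
  constructor
  · rintro ⟨L, hL, hxL, hyL, hzL⟩
    have : FiniteDimensional (ZMod 2) L := Module.finite_of_finrank_pos (by omega)
    have hle : span (ZMod 2) {x, y} ≤ L := span_le.2 (Set.insert_subset hxL (by simpa))
    have heq := eq_of_le_of_finrank_le hle (by rw [hL, finrank_span_pair_of_zmod_two hx hy hxy])
    obtain ⟨a, b, hab⟩ := mem_span_pair.1 (heq ▸ hzL)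
    rcases a.two_eq_zero_or_one with rfl | rfl <;> rcases b.two_eq_zero_or_one with rfl | rfl
    all_goals simp only [zero_smul, one_smul, add_zero, zero_add] at hab
    · exact absurd hab.symm hz
    · exact absurd hab hyz
    · exact absurd hab hxz
    · rw [← hab, ZModModule.add_self]
  · intro h
    have hz' : z = x + y := by
      rw [← ZModModule.neg_eq_self z, ← add_eq_zero_iff_neg_eq'.1 h]
    refine ⟨span (ZMod 2) {x, y}, finrank_span_pair_of_zmod_two hx hy hxy,
      subset_span (by simp), subset_span (by simp), hz' ▸ add_mem (subset_span (by simp))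
        (subset_span (by simp))⟩

end ZModTwo

theorem Finset.card_eq_mul_card_image_of_card_fiber {α β : Type*} [DecidableEq β]
    {s : Finset α} (F : α → β) {n : ℕ} (h : ∀ a ∈ s, (s.filter (F · = F a)).card = n) :
    s.card = n * (s.image F).card := by
  rw [card_eq_sum_card_image F s, mul_comm, ← smul_eq_mul, ← sum_const]
  refine sum_congr rfl fun b hb => ?_
  obtain ⟨a, ha, rfl⟩ := mem_image.1 hb
  exact h a ha

theorem Nat.card_subtype_restrict_and {ι R : Type*} (p : ι → Prop) [DecidablePred p]
    (P : ({i // p i} → R) → Prop) (Q : ({i // ¬p i} → R) → Prop) :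
    Nat.card {x : ι → R // P (fun i => x i) ∧ Q (fun i => x i)} =
      Nat.card {y // P y} * Nat.card {z // Q z} := by
  rw [← Nat.card_prod]
  exact Nat.card_congr (((Equiv.piEquivPiSubtypeProd p _).subtypeEquiv fun _ => Iff.rfl).trans
    Equiv.subtypeProdEquivProd)

theorem Nat.card_pi_zmod_two_ne_zero {κ : Type*} [Finite κ] :
    Nat.card {y : κ → ZMod 2 // y ≠ 0} = 2 ^ Nat.card κ - 1 := by
  have := Fintype.ofFinite κ
  classical
  rw [Nat.card_eq_fintype_card, Fintype.card_subtype_compl, Fintype.card_subtype_eq,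
    Fintype.card_fun, ZMod.card, Nat.card_eq_fintype_card]

theorem restrict_eq_zero_iff {ι R : Type*} [Zero R] {p : ι → Prop} {x : ι → R} :
    (fun i : {i // p i} => x i) = 0 ↔ ∀ i, p i → x i = 0 := by
  simp [funext_iff]

theorem Nat.card_fin_val_lt {m n : ℕ} (h : m ≤ n) : Nat.card {i : Fin n // (i : ℕ) < m} = m := by
  rw [Nat.card_eq_fintype_card, Fintype.card_fin_lt_of_le h]

theorem Nat.card_fin_not_val_lt {m n : ℕ} (h : m ≤ n) :
    Nat.card {i : Fin n // ¬ (i : ℕ) < m} = n - m := by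
  rw [Nat.card_eq_fintype_card, Fintype.card_subtype_compl, Fintype.card_fin,
    Fintype.card_fin_lt_of_le h]

section OrderThree

variable {V : Type*} [AddCommGroup V] [Module (ZMod 2) V] (g : V →ₗ[ZMod 2] V)

/-- The orbit of the point `⟨x⟩` under `⟨g⟩`, when `g ^ 3 = 1`. -/
def pointOrbit (x : V) : Set (Submodule (ZMod 2) V) :=
  {ZMod 2 ∙ x, ZMod 2 ∙ g x, ZMod 2 ∙ g (g x)}

theorem map_span_singleton (x : V) : (ZMod 2 ∙ x).map g = ZMod 2 ∙ g x := by
  rw [map_span, Set.image_singleton]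

theorem card_fixed_points_eq :
    Nat.card {P : Submodule (ZMod 2) V | finrank (ZMod 2) P = 1 ∧ P.map g = P} =
      Nat.card {x : V // x ≠ 0 ∧ g x = x} := by
  let toPoint (x : {x : V // x ≠ 0 ∧ g x = x}) :
      {P : Submodule (ZMod 2) V | finrank (ZMod 2) P = 1 ∧ P.map g = P} :=
    ⟨ZMod 2 ∙ x.1, finrank_span_singleton x.2.1, by rw [map_span_singleton, x.2.2]⟩
  refine (Nat.card_congr (Equiv.ofBijective toPoint ⟨fun x y hxy => ?_, ?_⟩)).symm
  · exact Subtype.ext (span_singleton_inj_of_zmod_two.1 (congrArg Subtype.val hxy))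
  · rintro ⟨P, hP, hgP⟩
    obtain ⟨x, hx, rfl⟩ := finrank_eq_one_iff_exists_eq_span_singleton.1 hP
    rw [map_span_singleton, span_singleton_inj_of_zmod_two] at hgP
    exact ⟨⟨x, hx, hgP⟩, rfl⟩

variable {g} (hg : ∀ x, g (g (g x)) = x)
include hg

theorem apply_apply_ne_self {x : V} (hx : g x ≠ x) : g (g x) ≠ x := fun h =>
  hx <| by simpa [h] using hg x

theorem apply_apply_ne_apply {x : V} (hx : g x ≠ x) : g (g x) ≠ g x := fun h =>
  hx <| by simpa [h] using hg x

theorem pointOrbit_ncard_eq_three_iff (x : V) : (pointOrbit g x).ncard = 3 ↔ g x ≠ x := by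
  refine ⟨fun h hx => by simp [pointOrbit, hx] at h, fun hx => ?_⟩
  refine Set.ncard_eq_three.2 ⟨_, _, _, ?_, ?_, ?_, rfl⟩ <;>
    rw [Ne, span_singleton_inj_of_zmod_two]
  · exact hx.symm
  · exact (apply_apply_ne_self hg hx).symm
  · exact (apply_apply_ne_apply hg hx).symm

theorem pointOrbit_apply (x : V) : pointOrbit g (g x) = pointOrbit g x := by
  ext P
  simp only [pointOrbit, hg, Set.mem_insert_iff, Set.mem_singleton_iff]
  tauto

theorem pointOrbit_eq_pointOrbit_iff (x y : V) :
    pointOrbit g y = pointOrbit g x ↔ y = x ∨ y = g x ∨ y = g (g x) := by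
  constructor
  · intro h
    have : ZMod 2 ∙ y ∈ pointOrbit g x := h ▸ Set.mem_insert _ _
    simpa [pointOrbit, span_singleton_inj_of_zmod_two] using this
  · rintro (rfl | rfl | rfl)
    · rfl
    · exact pointOrbit_apply hg x
    · rw [pointOrbit_apply hg, pointOrbit_apply hg]

theorem exists_finrank_eq_two_pointOrbit_le_iff {x : V} (hx : g x ≠ x) :
    (∃ L : Submodule (ZMod 2) V, finrank (ZMod 2) L = 2 ∧ ∀ P ∈ pointOrbit g x, P ≤ L) ↔
      x + g x + g (g x) = 0 := by
  have hne {y : V} (hy : g y ≠ y) : y ≠ 0 := fun h => hy (by rw [h, map_zero])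
  have hgx := apply_apply_ne_apply hg hx
  have hggx : g (g (g x)) ≠ g (g x) := by rw [hg]; exact (apply_apply_ne_self hg hx).symm
  rw [← exists_finrank_eq_two_mem_iff (hne hx) (hne hgx) (hne hggx) hx.symm
    (apply_apply_ne_self hg hx).symm hgx.symm]
  simp [pointOrbit, span_singleton_le_iff_mem]

theorem card_eq_three_mul_card_image_pointOrbit [Finite V] (q : V → Prop) :
    Nat.card {x // g x ≠ x ∧ q (x + g x + g (g x))} =
      3 * Nat.card (pointOrbit g '' {x | g x ≠ x ∧ q (x + g x + g (g x))}) := by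
  classical
  have := Fintype.ofFinite V
  set p : V → Prop := fun x => g x ≠ x ∧ q (x + g x + g (g x))
  have hpg {x : V} (hx : p x) : p (g x) := by
    refine ⟨apply_apply_ne_apply hg hx.1, ?_⟩
    rw [hg, add_comm, ← add_assoc]
    exact hx.2
  have hs : ((Finset.univ.filter p).image (pointOrbit g) : Set _) = pointOrbit g '' {x | p x} := by
    simp
  rw [← hs, Nat.card_coe_set_eq, Set.ncard_coe_finset, Nat.card_eq_fintype_card,
    Fintype.card_subtype]
  refine Finset.card_eq_mul_card_image_of_card_fiber _ fun x hx => ?_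
  replace hx : p x := (Finset.mem_filter.1 hx).2
  have hfiber : (Finset.univ.filter p).filter (pointOrbit g · = pointOrbit g x) =
      {x, g x, g (g x)} := by
    ext y
    simp only [Finset.mem_filter, Finset.mem_univ, true_and, Finset.mem_insert,
      Finset.mem_singleton, pointOrbit_eq_pointOrbit_iff hg]
    constructor
    · exact And.right
    · rintro (rfl | rfl | rfl)
      exacts [⟨hx, .inl rfl⟩, ⟨hpg hx, .inr (.inl rfl)⟩, ⟨hpg (hpg hx), .inr (.inr rfl)⟩]
  rw [hfiber, Finset.card_eq_three]
  exact ⟨_, _, _, hx.1.symm, (apply_apply_ne_self hg hx.1).symm,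
    (apply_apply_ne_apply hg hx.1).symm, rfl⟩

end OrderThree

open Matrix

variable {v f : ℕ}

/-- `(i, j)` indexes one of the `2 × 2` blocks of `A_{v,f}`. -/
def IsBlock (v f : ℕ) (i j : Fin v) : Prop :=
  Even (i : ℕ) ∧ (j : ℕ) = i + 1 ∧ (j : ℕ) < v - f

theorem vecMul_Avf_apply_of_le (hvf : Even (v - f)) (x : Fin v → ZMod 2) {j : Fin v}
    (hj : v - f ≤ j) : (x ᵥ* Avf v f) j = x j := by
  have hcol : (fun i => Avf v f i j) = Pi.single j 1 := by
    obtain ⟨m, hm⟩ := hvf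
    ext i
    simp only [Avf, of_apply, Pi.single_apply, Fin.ext_iff]
    split_ifs <;> first | rfl | omega
  rw [vecMul, hcol, dotProduct_single, mul_one]

theorem vecMul_Avf_apply_fst (x : Fin v → ZMod 2) {i j : Fin v} (h : IsBlock v f i j) :
    (x ᵥ* Avf v f) i = x j := by
  obtain ⟨⟨m, hm⟩, hj, hjv⟩ := h
  have hcol : (fun k => Avf v f k i) = Pi.single j 1 := by
    ext k
    simp only [Avf, of_apply, Pi.single_apply, Fin.ext_iff]
    split_ifs <;> first | rfl | omega
  rw [vecMul, hcol, dotProduct_single, mul_one]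

theorem vecMul_Avf_apply_snd (x : Fin v → ZMod 2) {i j : Fin v} (h : IsBlock v f i j) :
    (x ᵥ* Avf v f) j = x i + x j := by
  obtain ⟨⟨m, hm⟩, hj, hjv⟩ := h
  have hcol : (fun k => Avf v f k j) = Pi.single i 1 + Pi.single j 1 := by
    ext k
    simp only [Avf, of_apply, Pi.add_apply, Pi.single_apply, Fin.ext_iff]
    split_ifs <;> first | rfl | omega
  rw [vecMul, hcol, dotProduct_add, dotProduct_single, dotProduct_single, mul_one, mul_one]

theorem forall_lt_sub_iff_forall_isBlock (hvf : Even (v - f)) {P : Fin v → Prop} :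
    (∀ j : Fin v, (j : ℕ) < v - f → P j) ↔ ∀ i j : Fin v, IsBlock v f i j → P i ∧ P j := by
  refine ⟨fun h i j ⟨_, hj, hjv⟩ => ⟨h i (by omega), h j hjv⟩, fun h k hk => ?_⟩
  obtain ⟨m, hm⟩ := hvf
  rcases Nat.even_or_odd (k : ℕ) with ⟨r, hr⟩ | ⟨r, hr⟩
  · exact (h k ⟨k + 1, by omega⟩ ⟨⟨r, hr⟩, rfl, by simp only; omega⟩).1
  · exact (h ⟨k - 1, by omega⟩ k ⟨⟨r, by simp only; omega⟩, by simp only; omega, hk⟩).2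

theorem eq_iff_forall_isBlock_and_forall_le (hvf : Even (v - f)) {x y : Fin v → ZMod 2} :
    x = y ↔ (∀ i j : Fin v, IsBlock v f i j → x i = y i ∧ x j = y j) ∧
      ∀ j : Fin v, v - f ≤ j → x j = y j := by
  rw [← forall_lt_sub_iff_forall_isBlock hvf, funext_iff]
  exact ⟨fun h => ⟨fun j _ => h j, fun j _ => h j⟩,
    fun ⟨hhead, htail⟩ j => (lt_or_ge (j : ℕ) (v - f)).elim (hhead j) (htail j)⟩

theorem vecMulLinear_Avf_apply_apply_apply (hvf : Even (v - f)) (x : Fin v → ZMod 2) :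
    (Avf v f).vecMulLinear ((Avf v f).vecMulLinear ((Avf v f).vecMulLinear x)) = x := by
  change x ᵥ* Avf v f ᵥ* Avf v f ᵥ* Avf v f = x
  refine (eq_iff_forall_isBlock_and_forall_le hvf).2 ⟨fun i j h => ?_, fun j hj => ?_⟩
  · simp only [vecMul_Avf_apply_fst _ h, vecMul_Avf_apply_snd _ h]
    generalize x i = a, x j = b
    revert a b
    decide
  · rw [vecMul_Avf_apply_of_le hvf _ hj, vecMul_Avf_apply_of_le hvf _ hj,
      vecMul_Avf_apply_of_le hvf _ hj]

theorem vecMul_Avf_eq_self_iff (hvf : Even (v - f)) (x : Fin v → ZMod 2) :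
    x ᵥ* Avf v f = x ↔ ∀ j : Fin v, (j : ℕ) < v - f → x j = 0 := by
  rw [eq_iff_forall_isBlock_and_forall_le hvf, forall_lt_sub_iff_forall_isBlock hvf]
  refine (and_iff_left fun j hj => vecMul_Avf_apply_of_le hvf x hj).trans ?_
  refine forall₂_congr fun i j => forall_congr' fun h => ?_
  rw [vecMul_Avf_apply_fst _ h, vecMul_Avf_apply_snd _ h]
  generalize x i = a, x j = b
  revert a b
  decide

theorem add_vecMul_Avf_add_eq_zero_iff (hvf : Even (v - f)) (x : Fin v → ZMod 2) :
    x + x ᵥ* Avf v f + x ᵥ* Avf v f ᵥ* Avf v f = 0 ↔ ∀ j : Fin v, v - f ≤ j → x j = 0 := by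
  rw [eq_iff_forall_isBlock_and_forall_le hvf]
  have hblock : ∀ i j : Fin v, IsBlock v f i j →
      (x + x ᵥ* Avf v f + x ᵥ* Avf v f ᵥ* Avf v f) i = (0 : Fin v → ZMod 2) i ∧
        (x + x ᵥ* Avf v f + x ᵥ* Avf v f ᵥ* Avf v f) j = (0 : Fin v → ZMod 2) j := by
    intro i j h
    simp only [Pi.add_apply, Pi.zero_apply, vecMul_Avf_apply_fst _ h,
      vecMul_Avf_apply_snd _ h]
    generalize x i = a, x j = b
    revert a b
    decide
  refine (and_iff_right hblock).trans (forall₂_congr fun j hj => ?_)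
  rw [Pi.add_apply, Pi.add_apply, Pi.zero_apply, vecMul_Avf_apply_of_le hvf _ hj,
    vecMul_Avf_apply_of_le hvf _ hj, vecMul_Avf_apply_of_le hvf _ hj]
  generalize x j = a
  revert a
  decide

theorem card_ne_zero_vecMul_Avf_eq_self (hf : f ≤ v) (hvf : Even (v - f)) :
    Nat.card {x : Fin v → ZMod 2 // x ≠ 0 ∧ x ᵥ* Avf v f = x} = 2 ^ f - 1 := by
  have key : ∀ x : Fin v → ZMod 2, x ≠ 0 ∧ x ᵥ* Avf v f = x ↔
      (fun j : {j : Fin v // (j : ℕ) < v - f} => x j) = 0 ∧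
        (fun j : {j : Fin v // ¬ (j : ℕ) < v - f} => x j) ≠ 0 := by
    intro x
    rw [vecMul_Avf_eq_self_iff hvf]
    simp only [ne_eq, restrict_eq_zero_iff, not_lt]
    constructor
    · rintro ⟨hx, hhead⟩
      refine ⟨hhead, fun htail => hx (funext fun j => ?_)⟩
      exact (lt_or_ge (j : ℕ) (v - f)).elim (hhead j) (htail j)
    · rintro ⟨hhead, htail⟩
      exact ⟨fun h => htail fun j _ => congrFun h j, hhead⟩
  rw [Nat.card_congr (Equiv.subtypeEquivRight key),
    Nat.card_subtype_restrict_and _ (· = 0) (· ≠ 0), Nat.card_unique (α := {z : _ // z = 0}),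
    Nat.card_pi_zmod_two_ne_zero, Nat.card_fin_not_val_lt (Nat.sub_le v f),
    Nat.sub_sub_self hf, one_mul]

theorem card_vecMul_Avf_ne_self_and_sum_eq_zero (hvf : Even (v - f)) :
    Nat.card {x : Fin v → ZMod 2 // x ᵥ* Avf v f ≠ x ∧
      x + x ᵥ* Avf v f + x ᵥ* Avf v f ᵥ* Avf v f = 0} = 2 ^ (v - f) - 1 := by
  have key : ∀ x : Fin v → ZMod 2, x ᵥ* Avf v f ≠ x ∧
      x + x ᵥ* Avf v f + x ᵥ* Avf v f ᵥ* Avf v f = 0 ↔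
      (fun j : {j : Fin v // (j : ℕ) < v - f} => x j) ≠ 0 ∧
        (fun j : {j : Fin v // ¬ (j : ℕ) < v - f} => x j) = 0 := by
    intro x
    simp only [ne_eq, vecMul_Avf_eq_self_iff hvf, add_vecMul_Avf_add_eq_zero_iff hvf,
      restrict_eq_zero_iff, not_lt]
  rw [Nat.card_congr (Equiv.subtypeEquivRight key),
    Nat.card_subtype_restrict_and _ (· ≠ 0) (· = 0), Nat.card_pi_zmod_two_ne_zero,
    Nat.card_unique (α := {z : _ // z = 0}), Nat.card_fin_val_lt (Nat.sub_le v f), mul_one]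

theorem card_vecMul_Avf_ne_self_and_sum_ne_zero (hf : f ≤ v) (hvf : Even (v - f)) :
    Nat.card {x : Fin v → ZMod 2 // x ᵥ* Avf v f ≠ x ∧
      x + x ᵥ* Avf v f + x ᵥ* Avf v f ᵥ* Avf v f ≠ 0} = (2 ^ (v - f) - 1) * (2 ^ f - 1) := by
  have key : ∀ x : Fin v → ZMod 2, x ᵥ* Avf v f ≠ x ∧
      x + x ᵥ* Avf v f + x ᵥ* Avf v f ᵥ* Avf v f ≠ 0 ↔
      (fun j : {j : Fin v // (j : ℕ) < v - f} => x j) ≠ 0 ∧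
        (fun j : {j : Fin v // ¬ (j : ℕ) < v - f} => x j) ≠ 0 := by
    intro x
    simp only [ne_eq, vecMul_Avf_eq_self_iff hvf, add_vecMul_Avf_add_eq_zero_iff hvf,
      restrict_eq_zero_iff, not_lt]
  rw [Nat.card_congr (Equiv.subtypeEquivRight key),
    Nat.card_subtype_restrict_and _ (· ≠ 0) (· ≠ 0), Nat.card_pi_zmod_two_ne_zero,
    Nat.card_pi_zmod_two_ne_zero, Nat.card_fin_val_lt (Nat.sub_le v f),
    Nat.card_fin_not_val_lt (Nat.sub_le v f), Nat.sub_sub_self hf]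

theorem insert_mapMat_eq_pointOrbit (A : Matrix (Fin v) (Fin v) (ZMod 2)) (x : Fin v → ZMod 2) :
    ({ZMod 2 ∙ x, mapMat A (ZMod 2 ∙ x), mapMat A (mapMat A (ZMod 2 ∙ x))} :
      Set (Submodule (ZMod 2) (Fin v → ZMod 2))) = pointOrbit A.vecMulLinear x := by
  simp only [mapMat, map_span_singleton, pointOrbit]

section Orbits

variable (hvf : Even (v - f))
include hvf

theorem isPtOrbit3_iff {O : Set (Submodule (ZMod 2) (Fin v → ZMod 2))} :
    IsPtOrbit3 v f O ↔ ∃ x, x ᵥ* Avf v f ≠ x ∧ O = pointOrbit (Avf v f).vecMulLinear x := by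
  have hg := vecMulLinear_Avf_apply_apply_apply hvf
  constructor
  · rintro ⟨P, hP, rfl, h3⟩
    obtain ⟨x, -, rfl⟩ := finrank_eq_one_iff_exists_eq_span_singleton.1 hP
    rw [insert_mapMat_eq_pointOrbit, pointOrbit_ncard_eq_three_iff hg] at h3
    rw [insert_mapMat_eq_pointOrbit]
    exact ⟨x, h3, rfl⟩
  · rintro ⟨x, hx, rfl⟩
    have hx0 : x ≠ 0 := fun h => hx (by rw [h, zero_vecMul])
    exact ⟨ZMod 2 ∙ x, finrank_span_singleton hx0, (insert_mapMat_eq_pointOrbit _ x).symm,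
      (pointOrbit_ncard_eq_three_iff hg x).2 hx⟩

theorem setOf_isOrbitLine_eq :
    {O | IsOrbitLine v f O} = pointOrbit (Avf v f).vecMulLinear ''
      {x | x ᵥ* Avf v f ≠ x ∧ x + x ᵥ* Avf v f + x ᵥ* Avf v f ᵥ* Avf v f = 0} := by
  ext O
  simp only [IsOrbitLine, isPtOrbit3_iff hvf, Set.mem_image]
  constructor
  · rintro ⟨⟨x, hx, rfl⟩, hL⟩
    exact ⟨x, ⟨hx, (exists_finrank_eq_two_pointOrbit_le_iff
      (vecMulLinear_Avf_apply_apply_apply hvf) hx).1 hL⟩, rfl⟩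
  · rintro ⟨x, ⟨hx, hsum⟩, rfl⟩
    exact ⟨⟨x, hx, rfl⟩, (exists_finrank_eq_two_pointOrbit_le_iff
      (vecMulLinear_Avf_apply_apply_apply hvf) hx).2 hsum⟩

theorem setOf_isOrbitTriangle_eq :
    {O | IsOrbitTriangle v f O} = pointOrbit (Avf v f).vecMulLinear ''
      {x | x ᵥ* Avf v f ≠ x ∧ x + x ᵥ* Avf v f + x ᵥ* Avf v f ᵥ* Avf v f ≠ 0} := by
  ext O
  simp only [IsOrbitTriangle, isPtOrbit3_iff hvf, Set.mem_image]
  constructor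
  · rintro ⟨⟨x, hx, rfl⟩, hL⟩
    exact ⟨x, ⟨hx, mt (exists_finrank_eq_two_pointOrbit_le_iff
      (vecMulLinear_Avf_apply_apply_apply hvf) hx).2 hL⟩, rfl⟩
  · rintro ⟨x, ⟨hx, hsum⟩, rfl⟩
    exact ⟨⟨x, hx, rfl⟩, mt (exists_finrank_eq_two_pointOrbit_le_iff
      (vecMulLinear_Avf_apply_apply_apply hvf) hx).1 hsum⟩

end Orbits

/-- Under the action of `⟨A_{v,f}⟩` on the points of `GF(2)^v` there are exactly
`2^f - 1` fixed points, `(2^{v-f} - 1)/3` orbit lines and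
`(2^{v-f} - 1)(2^f - 1)/3` orbit triangles. -/
theorem stmt3 (v f : ℕ) (hf : f ≤ v - 1) (hvf : Even (v - f)) :
    Nat.card {P : Submodule (ZMod 2) (Fin v → ZMod 2) |
        Module.finrank (ZMod 2) P = 1 ∧ mapMat (Avf v f) P = P} = 2 ^ f - 1 ∧
    Nat.card {O : Set (Submodule (ZMod 2) (Fin v → ZMod 2)) | IsOrbitLine v f O}
        = (2 ^ (v - f) - 1) / 3 ∧
    Nat.card {O : Set (Submodule (ZMod 2) (Fin v → ZMod 2)) | IsOrbitTriangle v f O}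
        = (2 ^ (v - f) - 1) * (2 ^ f - 1) / 3 := by
  have hfv : f ≤ v := by omega
  have hg := vecMulLinear_Avf_apply_apply_apply hvf
  have hlines := card_eq_three_mul_card_image_pointOrbit hg (· = 0)
  have htriangles := card_eq_three_mul_card_image_pointOrbit hg (· ≠ 0)
  simp only [vecMulLinear_apply] at hlines htriangles
  rw [card_vecMul_Avf_ne_self_and_sum_eq_zero hvf] at hlines
  rw [card_vecMul_Avf_ne_self_and_sum_ne_zero hfv hvf] at htriangles
  refine ⟨?_, ?_, ?_⟩
  · rw [← card_ne_zero_vecMul_Avf_eq_self hfv hvf]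
    exact card_fixed_points_eq _
  · rw [setOf_isOrbitLine_eq hvf]
    omega
  · rw [setOf_isOrbitTriangle_eq hvf]
    omega
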